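/- For φ, ψ ∈ 𝒮(ℝ^n), the transform V_φ intertwines the standard quantization with the phase-space quantization: (x_j/2 + iℏ∂_{p_j})(V_φψ) = V_φ(x_jψ) and (p_j/2 − iℏ∂_{x_j})(V_φψ) = V_φ(−iℏ∂_{x_j}ψ) for each j. -/

import Mathlib

/-!
Substituting `x' = x - y` gives `V_φψ(x,p) = e^{-ip·x/(2ℏ)} (2πℏ)^{-n/2} J_φψ(x,p)` with
`J_φψ(x,p) = ∫ φ(y) e^{(i/ℏ)p·y} ψ(x - y) dy` (`modulatedConv`). Differentiating under the
integral sign (dominated by `(1 + ‖y‖)‖φ(y)‖` because `ψ` and `∇ψ` are bounded),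
`∂_{p_j} J_φψ = (i/ℏ) J_{y_j φ, ψ}` and `∂_{x_j} J_φψ = J_{φ, ∂_j ψ}`, while the prefactor
contributes `-(i/2ℏ) x_j` resp. `-(i/2ℏ) p_j`. Splitting `x_j = y_j + (x - y)_j` then turns
`x_j J_φψ - J_{y_j φ, ψ}` into `J_{φ, x_j ψ}`.
-/

open Complex Real MeasureTheory

/-- The transform `V_φψ(x,p) = e^{−ip·x/(2ℏ)} (2πℏ)^{−n/2} ∫ e^{(i/ℏ)p·(x−x')} φ(x−x')ψ(x')dx'`. -/
noncomputable def Vphi (n : ℕ) (hbar : ℝ) (φ ψ : (Fin n → ℝ) → ℂ)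
    (z : (Fin n → ℝ) × (Fin n → ℝ)) : ℂ :=
  Complex.exp (-(I / (2 * (hbar : ℂ))) * ((∑ i, z.2 i * z.1 i : ℝ) : ℂ)) *
    ((((1 / (2 * π * hbar)) ^ ((n : ℝ) / 2) : ℝ) : ℂ) *
      ∫ x' : Fin n → ℝ,
        Complex.exp ((I / (hbar : ℂ)) * ((∑ i, z.2 i * (z.1 i - x' i) : ℝ) : ℂ))
          * φ (z.1 - x') * ψ x')

section

open ContinuousLinearMap SchwartzMap LineDeriv

variable {n : ℕ}

noncomputable def dotProductCLM (y : Fin n → ℝ) : (Fin n → ℝ) →L[ℝ] ℝ :=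
  ∑ i, y i • proj i

@[simp]
lemma dotProductCLM_apply (y v : Fin n → ℝ) : dotProductCLM y v = v ⬝ᵥ y := by
  simp [dotProductCLM, dotProduct, mul_comm]

lemma norm_dotProductCLM_le (y : Fin n → ℝ) : ‖dotProductCLM y‖ ≤ n * ‖y‖ := by
  refine opNorm_le_bound _ (by positivity) fun v => ?_
  rw [dotProductCLM_apply]
  calc ‖v ⬝ᵥ y‖ ≤ ∑ i, ‖v i‖ * ‖y i‖ := by
        simpa [dotProduct] using norm_sum_le Finset.univ fun i => v i * y i
    _ ≤ ∑ _i : Fin n, ‖v‖ * ‖y‖ := by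
        gcongr with i
        · exact norm_le_pi_norm v i
        · exact norm_le_pi_norm y i
    _ = n * ‖y‖ * ‖v‖ := by simp; ring

lemma hasFDerivAt_snd_dotProduct (y : Fin n → ℝ) (z : (Fin n → ℝ) × (Fin n → ℝ)) :
    HasFDerivAt (fun z : (Fin n → ℝ) × (Fin n → ℝ) => z.2 ⬝ᵥ y)
      ((dotProductCLM y).comp (snd ℝ _ _)) z := by
  convert ((dotProductCLM y).comp (snd ℝ _ _)).hasFDerivAt (x := z) using 1
  funext w
  simp only [comp_apply, coe_snd', dotProductCLM_apply]

lemma hasFDerivAt_snd_dotProduct_fst (z : (Fin n → ℝ) × (Fin n → ℝ)) :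
    HasFDerivAt (fun z : (Fin n → ℝ) × (Fin n → ℝ) => z.2 ⬝ᵥ z.1)
      ((dotProductCLM z.1).comp (snd ℝ _ _) + (dotProductCLM z.2).comp (fst ℝ _ _)) z := by
  have hfst (i : Fin n) : HasFDerivAt (fun z : (Fin n → ℝ) × (Fin n → ℝ) => z.1 i)
      ((proj i).comp (fst ℝ _ _)) z :=
    ((proj (R := ℝ) (φ := fun _ : Fin n => ℝ) i).comp (fst ℝ _ (Fin n → ℝ))).hasFDerivAt
  have hsnd (i : Fin n) : HasFDerivAt (fun z : (Fin n → ℝ) × (Fin n → ℝ) => z.2 i)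
      ((proj i).comp (snd ℝ _ _)) z :=
    ((proj (R := ℝ) (φ := fun _ : Fin n => ℝ) i).comp (snd ℝ (Fin n → ℝ) _)).hasFDerivAt
  refine (HasFDerivAt.fun_sum (u := Finset.univ) fun i _ =>
    (hsnd i).fun_mul (hfst i)).congr_fderiv ?_
  ext v <;> simp [dotProduct, Finset.sum_add_distrib, mul_comm]

lemma norm_cexp_I_div_mul_ofReal (h r : ℝ) : ‖cexp (I / h * r)‖ = 1 := by
  rw [show I / h * r = I * ((r / h : ℝ) : ℂ) by push_cast; ring]
  exact norm_exp_I_mul_ofReal _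

noncomputable def modulatedConv (hbar : ℝ) (φ ψ : (Fin n → ℝ) → ℂ)
    (z : (Fin n → ℝ) × (Fin n → ℝ)) : ℂ :=
  ∫ y, φ y * cexp (I / hbar * (z.2 ⬝ᵥ y : ℝ)) * ψ (z.1 - y)

lemma Vphi_eq_modulatedConv (hbar : ℝ) (φ ψ : (Fin n → ℝ) → ℂ)
    (z : (Fin n → ℝ) × (Fin n → ℝ)) :
    Vphi n hbar φ ψ z = cexp (-(I / (2 * hbar)) * (z.2 ⬝ᵥ z.1 : ℝ)) *
      ((((1 / (2 * π * hbar)) ^ ((n : ℝ) / 2) : ℝ) : ℂ) * modulatedConv hbar φ ψ z) := by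
  rw [Vphi, modulatedConv, ← integral_sub_left_eq_self _ volume z.1]
  congr 3 with y
  simp only [sub_sub_cancel, dotProduct, Pi.sub_apply]
  ring

@[simp]
lemma modulatedConv_zero_left (hbar : ℝ) (ψ : (Fin n → ℝ) → ℂ)
    (z : (Fin n → ℝ) × (Fin n → ℝ)) : modulatedConv hbar (fun _ => 0) ψ z = 0 := by
  simp [modulatedConv]

@[simp]
lemma modulatedConv_zero_right (hbar : ℝ) (φ : (Fin n → ℝ) → ℂ)
    (z : (Fin n → ℝ) × (Fin n → ℝ)) : modulatedConv hbar φ (fun _ => 0) z = 0 := by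
  simp [modulatedConv]

lemma modulatedConv_const_mul (hbar : ℝ) (φ ψ : (Fin n → ℝ) → ℂ) (c : ℂ)
    (z : (Fin n → ℝ) × (Fin n → ℝ)) :
    modulatedConv hbar φ (fun x => c * ψ x) z = c * modulatedConv hbar φ ψ z := by
  rw [modulatedConv, modulatedConv, ← integral_const_mul]
  congr 1 with y
  ring

lemma integrable_modulatedConv_integrand {hbar : ℝ} {φ ψ : (Fin n → ℝ) → ℂ}
    (hφ : Integrable φ) (hψ : Continuous ψ) {C : ℝ} (hC : ∀ x, ‖ψ x‖ ≤ C)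
    (z : (Fin n → ℝ) × (Fin n → ℝ)) :
    Integrable fun y => φ y * cexp (I / hbar * (z.2 ⬝ᵥ y : ℝ)) * ψ (z.1 - y) :=
  (hφ.mul_bdd (by fun_prop : Continuous fun y => cexp (I / hbar * (z.2 ⬝ᵥ y : ℝ))).aestronglyMeasurable
      (.of_forall fun _ => (norm_cexp_I_div_mul_ofReal _ _).le)).mul_bdd
    (by fun_prop : Continuous fun y => ψ (z.1 - y)).aestronglyMeasurable (.of_forall fun _ => hC _)

lemma integrable_dotProduct_mul (φ : 𝓢(Fin n → ℝ, ℂ)) (w : Fin n → ℝ) :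
    Integrable fun y => ((w ⬝ᵥ y : ℝ) : ℂ) * φ y := by
  refine ((φ.integrable_pow_mul volume 1).const_mul (n * ‖w‖)).mono'
    (by fun_prop) (.of_forall fun y => ?_)
  have := (dotProductCLM w).le_opNorm y
  rw [dotProductCLM_apply, dotProduct_comm] at this
  rw [norm_mul, Complex.norm_real, pow_one, ← mul_assoc]
  gcongr
  exact this.trans (by gcongr; exact norm_dotProductCLM_le w)

lemma modulatedConv_coord_mul (hbar : ℝ) (φ ψ : 𝓢(Fin n → ℝ, ℂ)) (j : Fin n)
    (z : (Fin n → ℝ) × (Fin n → ℝ)) :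
    modulatedConv hbar φ (fun x => (x j : ℂ) * ψ x) z =
      z.1 j * modulatedConv hbar φ ψ z - modulatedConv hbar (fun y => (y j : ℂ) * φ y) ψ z := by
  have hψ := norm_le_seminorm ℝ ψ
  have h₁ := integrable_modulatedConv_integrand (hbar := hbar) φ.integrable ψ.continuous hψ z
  have h₂ := integrable_modulatedConv_integrand (hbar := hbar)
    (integrable_dotProduct_mul φ (Pi.single j 1)) ψ.continuous hψ z
  simp only [single_dotProduct, one_mul] at h₂
  rw [modulatedConv, modulatedConv, modulatedConv, ← integral_const_mul,
    ← integral_sub (h₁.const_mul _) h₂]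
  congr 1 with y
  simp only [Pi.sub_apply, ofReal_sub]
  ring

noncomputable def modulatedConvIntegrandFDeriv (hbar : ℝ) (φ ψ : (Fin n → ℝ) → ℂ)
    (z : (Fin n → ℝ) × (Fin n → ℝ)) (y : Fin n → ℝ) :
    ((Fin n → ℝ) × (Fin n → ℝ)) →L[ℝ] ℂ :=
  (φ y * cexp (I / hbar * (z.2 ⬝ᵥ y : ℝ))) •
    ((fderiv ℝ ψ (z.1 - y)).comp (fst ℝ _ _) +
      (I / hbar * ψ (z.1 - y)) • ofRealCLM.comp ((dotProductCLM y).comp (snd ℝ _ _)))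

lemma modulatedConvIntegrandFDeriv_apply (hbar : ℝ) (φ ψ : (Fin n → ℝ) → ℂ)
    (z v : (Fin n → ℝ) × (Fin n → ℝ)) (y : Fin n → ℝ) :
    modulatedConvIntegrandFDeriv hbar φ ψ z y v = φ y * cexp (I / hbar * (z.2 ⬝ᵥ y : ℝ)) *
      (fderiv ℝ ψ (z.1 - y) v.1 + I / hbar * ψ (z.1 - y) * (v.2 ⬝ᵥ y : ℝ)) := by
  simp [modulatedConvIntegrandFDeriv, mul_add]

lemma hasFDerivAt_modulatedConv_integrand (hbar : ℝ) (φ : (Fin n → ℝ) → ℂ)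
    {ψ : (Fin n → ℝ) → ℂ} (y : Fin n → ℝ) {z : (Fin n → ℝ) × (Fin n → ℝ)}
    (hψ : DifferentiableAt ℝ ψ (z.1 - y)) :
    HasFDerivAt (fun z : (Fin n → ℝ) × (Fin n → ℝ) =>
        φ y * cexp (I / hbar * (z.2 ⬝ᵥ y : ℝ)) * ψ (z.1 - y))
      (modulatedConvIntegrandFDeriv hbar φ ψ z y) z := by
  have hphase := (((ofRealCLM.hasFDerivAt).comp z (hasFDerivAt_snd_dotProduct y z)).const_mul
    (I / hbar)).cexp
  have hshift := hψ.hasFDerivAt.comp z (hasFDerivAt_fst.sub_const y)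
  refine ((hphase.const_mul (φ y)).mul hshift).congr_fderiv (ext fun v => ?_)
  rw [modulatedConvIntegrandFDeriv_apply]
  simp only [add_apply, smul_apply, comp_apply, smul_eq_mul, coe_fst', coe_snd',
    Function.comp_apply, ofRealCLM_apply, dotProductCLM_apply]
  ring

lemma norm_modulatedConvIntegrandFDeriv_le (hbar : ℝ) (φ ψ : (Fin n → ℝ) → ℂ)
    (z : (Fin n → ℝ) × (Fin n → ℝ)) (y : Fin n → ℝ) :
    ‖modulatedConvIntegrandFDeriv hbar φ ψ z y‖ ≤
      ‖φ y‖ * (‖fderiv ℝ ψ (z.1 - y)‖ + ‖I / hbar‖ * ‖ψ (z.1 - y)‖ * (n * ‖y‖)) := by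
  rw [modulatedConvIntegrandFDeriv, norm_smul, norm_mul, norm_cexp_I_div_mul_ofReal, mul_one]
  gcongr
  refine (norm_add_le _ _).trans (add_le_add ?_ ?_)
  · exact (opNorm_comp_le _ _).trans (mul_le_of_le_one_right (norm_nonneg _) (norm_fst_le ..))
  · rw [norm_smul, norm_mul]
    gcongr
    calc _ ≤ ‖ofRealCLM‖ * (‖dotProductCLM y‖ * ‖snd ℝ (Fin n → ℝ) (Fin n → ℝ)‖) :=
          (opNorm_comp_le _ _).trans (by gcongr; exact opNorm_comp_le _ _)
      _ ≤ 1 * (n * ‖y‖ * 1) := by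
          gcongr
          · exact ofRealCLM_norm.le
          · exact norm_dotProductCLM_le y
          · exact norm_snd_le ..
      _ = n * ‖y‖ := by ring

lemma continuous_modulatedConvIntegrandFDeriv (hbar : ℝ) (φ ψ : 𝓢(Fin n → ℝ, ℂ))
    (z : (Fin n → ℝ) × (Fin n → ℝ)) : Continuous (modulatedConvIntegrandFDeriv hbar φ ψ z) := by
  have : Continuous (fderiv ℝ ψ) := (fderivCLM ℝ _ _ ψ).continuous
  have := ψ.continuous
  unfold modulatedConvIntegrandFDeriv dotProductCLM
  fun_prop

lemma exists_integrable_bound_modulatedConvIntegrandFDeriv (hbar : ℝ) (φ ψ : 𝓢(Fin n → ℝ, ℂ)) :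
    ∃ bound : (Fin n → ℝ) → ℝ, Integrable bound ∧
      ∀ z y, ‖modulatedConvIntegrandFDeriv hbar φ ψ z y‖ ≤ bound y := by
  set C := SchwartzMap.seminorm ℝ 0 0 ψ
  set C' := SchwartzMap.seminorm ℝ 0 0 (fderivCLM ℝ _ _ ψ)
  refine ⟨fun y => ‖φ y‖ * (C' + ‖I / hbar‖ * C * (n * ‖y‖)), ?_, fun z y => ?_⟩
  · exact ((φ.integrable.norm.const_mul C').add
      ((φ.integrable_pow_mul volume 1).const_mul (‖I / hbar‖ * C * n))).congr
      (.of_forall fun y => by simp only [Pi.add_apply]; ring)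
  · refine (norm_modulatedConvIntegrandFDeriv_le hbar φ ψ z y).trans ?_
    dsimp only
    gcongr
    exacts [norm_le_seminorm ℝ (fderivCLM ℝ _ _ ψ) _, norm_le_seminorm ℝ ψ _]

lemma integrable_modulatedConvIntegrandFDeriv (hbar : ℝ) (φ ψ : 𝓢(Fin n → ℝ, ℂ))
    (z : (Fin n → ℝ) × (Fin n → ℝ)) : Integrable (modulatedConvIntegrandFDeriv hbar φ ψ z) := by
  obtain ⟨bound, hbound, hle⟩ := exists_integrable_bound_modulatedConvIntegrandFDeriv hbar φ ψ
  exact hbound.mono' (continuous_modulatedConvIntegrandFDeriv hbar φ ψ z).aestronglyMeasurable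
    (.of_forall (hle z))

lemma hasFDerivAt_modulatedConv (hbar : ℝ) (φ ψ : 𝓢(Fin n → ℝ, ℂ))
    (z : (Fin n → ℝ) × (Fin n → ℝ)) :
    HasFDerivAt (modulatedConv hbar φ ψ) (∫ y, modulatedConvIntegrandFDeriv hbar φ ψ z y) z := by
  obtain ⟨bound, hbound, hle⟩ := exists_integrable_bound_modulatedConvIntegrandFDeriv hbar φ ψ
  have hψ := norm_le_seminorm ℝ ψ
  exact hasFDerivAt_integral_of_dominated_of_fderiv_le Filter.univ_mem
    (.of_forall fun z =>
      (integrable_modulatedConv_integrand φ.integrable ψ.continuous hψ z).aestronglyMeasurable)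
    (integrable_modulatedConv_integrand φ.integrable ψ.continuous hψ z)
    (continuous_modulatedConvIntegrandFDeriv hbar φ ψ z).aestronglyMeasurable
    (.of_forall fun y z _ => hle z y) hbound
    (.of_forall fun y z _ => hasFDerivAt_modulatedConv_integrand hbar φ y ψ.differentiableAt)

lemma fderiv_modulatedConv_apply (hbar : ℝ) (φ ψ : 𝓢(Fin n → ℝ, ℂ))
    (z v : (Fin n → ℝ) × (Fin n → ℝ)) :
    fderiv ℝ (modulatedConv hbar φ ψ) z v =
      modulatedConv hbar φ (fun x => fderiv ℝ ψ x v.1) z +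
        I / hbar * modulatedConv hbar (fun y => ((v.2 ⬝ᵥ y : ℝ) : ℂ) * φ y) ψ z := by
  have hψ := norm_le_seminorm ℝ ψ
  have h₁ := integrable_modulatedConv_integrand (hbar := hbar) φ.integrable
    (∂_{v.1} ψ).continuous (norm_le_seminorm ℝ (∂_{v.1} ψ)) z
  have h₂ := integrable_modulatedConv_integrand (hbar := hbar)
    (integrable_dotProduct_mul φ v.2) ψ.continuous hψ z
  simp only [lineDerivOp_apply_eq_fderiv] at h₁
  rw [(hasFDerivAt_modulatedConv hbar φ ψ z).fderiv,
    integral_apply (integrable_modulatedConvIntegrandFDeriv hbar φ ψ z), modulatedConv,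
    modulatedConv, ← integral_const_mul, ← integral_add h₁ (h₂.const_mul _)]
  congr 1 with y
  rw [modulatedConvIntegrandFDeriv_apply]
  ring

lemma fderiv_Vphi_apply (hbar : ℝ) (φ ψ : 𝓢(Fin n → ℝ, ℂ))
    (z v : (Fin n → ℝ) × (Fin n → ℝ)) :
    fderiv ℝ (Vphi n hbar φ ψ) z v = cexp (-(I / (2 * hbar)) * (z.2 ⬝ᵥ z.1 : ℝ)) *
      ((((1 / (2 * π * hbar)) ^ ((n : ℝ) / 2) : ℝ) : ℂ) *
        (fderiv ℝ (modulatedConv hbar φ ψ) z v -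
          I / (2 * hbar) * (v.2 ⬝ᵥ z.1 + v.1 ⬝ᵥ z.2 : ℝ) * modulatedConv hbar φ ψ z)) := by
  have hphase := (((ofRealCLM.hasFDerivAt).comp z (hasFDerivAt_snd_dotProduct_fst z)).const_mul
    (-(I / (2 * hbar)))).cexp
  have hV := (hphase.mul ((hasFDerivAt_modulatedConv hbar φ ψ z).const_mul
    ((((1 / (2 * π * hbar)) ^ ((n : ℝ) / 2) : ℝ) : ℂ)))).congr_of_eventuallyEq
    (.of_forall (Vphi_eq_modulatedConv hbar φ ψ))
  rw [hV.fderiv, (hasFDerivAt_modulatedConv hbar φ ψ z).fderiv]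
  simp only [Function.comp_apply, ofRealCLM_apply, add_apply, smul_apply, smul_eq_mul,
    comp_apply, coe_fst', coe_snd', dotProductCLM_apply, ofReal_add]
  ring

end

/-- `V_φ` takes the usual quantization rules to the phase-space quantization rules:
`(x_j/2 + iℏ∂_{p_j})(V_φψ) = V_φ(x_jψ)` and `(p_j/2 − iℏ∂_{x_j})(V_φψ) = V_φ(−iℏ∂_{x_j}ψ)`. -/
theorem Vphi_intertwines_quantization (n : ℕ) (hbar : ℝ) (hhbar : 0 < hbar)
    (φ ψ : SchwartzMap (Fin n → ℝ) ℂ) (j : Fin n)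
    (z : (Fin n → ℝ) × (Fin n → ℝ)) :
    (((z.1 j / 2 : ℝ) : ℂ) * Vphi n hbar (⇑φ) (⇑ψ) z
        + I * (hbar : ℂ) * fderiv ℝ (Vphi n hbar (⇑φ) (⇑ψ)) z (0, Pi.single j 1)
      = Vphi n hbar (⇑φ) (fun x' => ((x' j : ℝ) : ℂ) * ψ x') z)
    ∧ (((z.2 j / 2 : ℝ) : ℂ) * Vphi n hbar (⇑φ) (⇑ψ) z
        - I * (hbar : ℂ) * fderiv ℝ (Vphi n hbar (⇑φ) (⇑ψ)) z (Pi.single j 1, 0)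
      = Vphi n hbar (⇑φ) (fun x' => -(I * (hbar : ℂ)) * fderiv ℝ (⇑ψ) x' (Pi.single j 1)) z) := by
  have hbar_ne : (hbar : ℂ) ≠ 0 := by exact_mod_cast hhbar.ne'
  constructor
  · rw [fderiv_Vphi_apply, fderiv_modulatedConv_apply, Vphi_eq_modulatedConv,
      Vphi_eq_modulatedConv, modulatedConv_coord_mul]
    simp only [map_zero, modulatedConv_zero_right, single_dotProduct, zero_dotProduct, one_mul,
      zero_add, add_zero, ofReal_div, ofReal_ofNat]
    field_simp
    ring_nf
    simp only [I_sq]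
    ring
  · rw [fderiv_Vphi_apply, fderiv_modulatedConv_apply, Vphi_eq_modulatedConv,
      Vphi_eq_modulatedConv, modulatedConv_const_mul]
    simp only [ofReal_zero, zero_mul, modulatedConv_zero_left, mul_zero, add_zero,
      single_dotProduct, zero_dotProduct, one_mul, zero_add, ofReal_div, ofReal_ofNat]
    field_simp
    ring_nf
    simp only [I_sq]
    ring
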